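/- arXiv:1010.5192 — 2 statements merged into one kernel-verified Lean document; each statement's English description precedes it below -/
import Mathlib

section
/- For every positive integer r, there exists an integer N* = N*(r) such that for all n ≥ N*, the vertex set of any multigraph G of order 2n with multiplicity at most r can be partitioned into two parts A and B with |A| = |B| = n such that every vertex v of G satisfies |d_A(v) − d_B(v)| < n^{2/3}. -/
open Finset

namespace BP
def sgn (b : Bool) : ℝ := if b then 1 else -1

lemma sum_cons_eq {n : ℕ} (f : (Fin (n+1) → Bool) → ℝ) :
    ∑ ε : Fin (n+1) → Bool, f ε
      = ∑ ε : Fin n → Bool, ∑ b : Bool, f (Fin.cons b ε) := by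
  rw [← (Fin.consEquiv (fun _ : Fin (n+1) => Bool)).sum_comp f, Fintype.sum_prod_type,
    Finset.sum_comm]
  rfl

lemma moments (n : ℕ) (c : Fin n → ℝ) :
    (∑ ε : Fin n → Bool, (∑ i, sgn (ε i) * c i) ^ 2 ≤ 2 ^ n * (∑ i, c i ^ 2)) ∧
    (∑ ε : Fin n → Bool, (∑ i, sgn (ε i) * c i) ^ 4 ≤ 3 * 2 ^ n * (∑ i, c i ^ 2) ^ 2) ∧
    (∑ ε : Fin n → Bool, (∑ i, sgn (ε i) * c i) ^ 6 ≤ 15 * 2 ^ n * (∑ i, c i ^ 2) ^ 3) ∧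
    (∑ ε : Fin n → Bool, (∑ i, sgn (ε i) * c i) ^ 8 ≤ 105 * 2 ^ n * (∑ i, c i ^ 2) ^ 4) := by
  induction n with
  | zero => simp
  | succ n ih =>
    obtain ⟨h2, h4, h6, h8⟩ := ih (fun i => c i.succ)
    have hcard : ((Finset.univ : Finset (Fin n → Bool)).card : ℝ) = 2 ^ n := by simp
    have hc : (∑ i, c i ^ 2) = c 0 ^ 2 + ∑ i : Fin n, c i.succ ^ 2 := Fin.sum_univ_succ _
    have hP : (0:ℝ) < 2 ^ n := by positivity
    have hσ : (0:ℝ) ≤ ∑ i : Fin n, c i.succ ^ 2 := by positivity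
    have ha : (0:ℝ) ≤ c 0 ^ 2 := sq_nonneg _
    have ha4 : (0:ℝ) ≤ c 0 ^ 4 := by positivity
    have ha6 : (0:ℝ) ≤ c 0 ^ 6 := by positivity
    have hcons : ∀ (b : Bool) (ε : Fin n → Bool),
        (∑ i : Fin (n+1), sgn ((Fin.cons b ε : Fin (n+1) → Bool) i) * c i)
          = sgn b * c 0 + ∑ i : Fin n, sgn (ε i) * c i.succ := by
      intro b ε
      rw [Fin.sum_univ_succ]
      simp
    have key : ∀ (k : ℕ) (ε : Fin n → Bool),
        ∑ b : Bool, (∑ i : Fin (n+1), sgn ((Fin.cons b ε : Fin (n+1) → Bool) i) * c i) ^ k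
          = ((∑ i : Fin n, sgn (ε i) * c i.succ) + c 0) ^ k
            + ((∑ i : Fin n, sgn (ε i) * c i.succ) - c 0) ^ k := by
      intro k ε
      rw [Fintype.sum_bool, hcons, hcons]
      simp only [sgn, if_true, if_false, Bool.false_eq_true, ite_true, ite_false]
      ring
    have expand : ∀ (k : ℕ),
        ∑ ε : Fin (n+1) → Bool, (∑ i, sgn (ε i) * c i) ^ k
          = ∑ ε : Fin n → Bool,
              (((∑ i : Fin n, sgn (ε i) * c i.succ) + c 0) ^ k
                + ((∑ i : Fin n, sgn (ε i) * c i.succ) - c 0) ^ k) := by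
      intro k
      rw [sum_cons_eq]
      exact Finset.sum_congr rfl fun ε _ => key k ε
    refine ⟨?_, ?_, ?_, ?_⟩
    · have e : ∑ ε : Fin (n+1) → Bool, (∑ i, sgn (ε i) * c i) ^ 2
          = 2 * (∑ ε : Fin n → Bool, (∑ i, sgn (ε i) * c i.succ) ^ 2)
            + 2 ^ n * (2 * c 0 ^ 2) := by
        rw [expand 2,
          Finset.sum_congr rfl fun (ε : Fin n → Bool) _ =>
            show ((∑ i : Fin n, sgn (ε i) * c i.succ) + c 0) ^ 2
                + ((∑ i : Fin n, sgn (ε i) * c i.succ) - c 0) ^ 2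
              = 2 * (∑ i : Fin n, sgn (ε i) * c i.succ) ^ 2 + 2 * c 0 ^ 2 by ring,
          Finset.sum_add_distrib, ← Finset.mul_sum, Finset.sum_const, nsmul_eq_mul, hcard]
      rw [e, hc, show (2:ℝ)^(n+1) = 2 * 2^n from by ring]
      nlinarith [h2]
    · have e : ∑ ε : Fin (n+1) → Bool, (∑ i, sgn (ε i) * c i) ^ 4
          = 2 * (∑ ε : Fin n → Bool, (∑ i, sgn (ε i) * c i.succ) ^ 4)
            + 12 * c 0 ^ 2 * (∑ ε : Fin n → Bool, (∑ i, sgn (ε i) * c i.succ) ^ 2)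
            + 2 ^ n * (2 * c 0 ^ 4) := by
        rw [expand 4,
          Finset.sum_congr rfl fun (ε : Fin n → Bool) _ =>
            show ((∑ i : Fin n, sgn (ε i) * c i.succ) + c 0) ^ 4
                + ((∑ i : Fin n, sgn (ε i) * c i.succ) - c 0) ^ 4
              = (2 * (∑ i : Fin n, sgn (ε i) * c i.succ) ^ 4
                  + 12 * c 0 ^ 2 * (∑ i : Fin n, sgn (ε i) * c i.succ) ^ 2)
                + 2 * c 0 ^ 4 by ring,
          Finset.sum_add_distrib, Finset.sum_add_distrib, ← Finset.mul_sum, ← Finset.mul_sum,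
          Finset.sum_const, nsmul_eq_mul, hcard]
      rw [e, hc, show (2:ℝ)^(n+1) = 2 * 2^n from by ring]
      nlinarith [h2, h4, mul_le_mul_of_nonneg_left h2 ha]
    · have e : ∑ ε : Fin (n+1) → Bool, (∑ i, sgn (ε i) * c i) ^ 6
          = 2 * (∑ ε : Fin n → Bool, (∑ i, sgn (ε i) * c i.succ) ^ 6)
            + 30 * c 0 ^ 2 * (∑ ε : Fin n → Bool, (∑ i, sgn (ε i) * c i.succ) ^ 4)
            + 30 * c 0 ^ 4 * (∑ ε : Fin n → Bool, (∑ i, sgn (ε i) * c i.succ) ^ 2)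
            + 2 ^ n * (2 * c 0 ^ 6) := by
        rw [expand 6,
          Finset.sum_congr rfl fun (ε : Fin n → Bool) _ =>
            show ((∑ i : Fin n, sgn (ε i) * c i.succ) + c 0) ^ 6
                + ((∑ i : Fin n, sgn (ε i) * c i.succ) - c 0) ^ 6
              = ((2 * (∑ i : Fin n, sgn (ε i) * c i.succ) ^ 6
                  + 30 * c 0 ^ 2 * (∑ i : Fin n, sgn (ε i) * c i.succ) ^ 4)
                  + 30 * c 0 ^ 4 * (∑ i : Fin n, sgn (ε i) * c i.succ) ^ 2)
                + 2 * c 0 ^ 6 by ring,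
          Finset.sum_add_distrib, Finset.sum_add_distrib, Finset.sum_add_distrib,
          ← Finset.mul_sum, ← Finset.mul_sum, ← Finset.mul_sum,
          Finset.sum_const, nsmul_eq_mul, hcard]
      rw [e, hc, show (2:ℝ)^(n+1) = 2 * 2^n from by ring]
      nlinarith [h2, h4, h6, mul_le_mul_of_nonneg_left h4 ha,
        mul_le_mul_of_nonneg_left h2 ha4, mul_nonneg (mul_nonneg hP.le ha) hσ]
    · have e : ∑ ε : Fin (n+1) → Bool, (∑ i, sgn (ε i) * c i) ^ 8
          = 2 * (∑ ε : Fin n → Bool, (∑ i, sgn (ε i) * c i.succ) ^ 8)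
            + 56 * c 0 ^ 2 * (∑ ε : Fin n → Bool, (∑ i, sgn (ε i) * c i.succ) ^ 6)
            + 140 * c 0 ^ 4 * (∑ ε : Fin n → Bool, (∑ i, sgn (ε i) * c i.succ) ^ 4)
            + 56 * c 0 ^ 6 * (∑ ε : Fin n → Bool, (∑ i, sgn (ε i) * c i.succ) ^ 2)
            + 2 ^ n * (2 * c 0 ^ 8) := by
        rw [expand 8,
          Finset.sum_congr rfl fun (ε : Fin n → Bool) _ =>
            show ((∑ i : Fin n, sgn (ε i) * c i.succ) + c 0) ^ 8
                + ((∑ i : Fin n, sgn (ε i) * c i.succ) - c 0) ^ 8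
              = (((2 * (∑ i : Fin n, sgn (ε i) * c i.succ) ^ 8
                  + 56 * c 0 ^ 2 * (∑ i : Fin n, sgn (ε i) * c i.succ) ^ 6)
                  + 140 * c 0 ^ 4 * (∑ i : Fin n, sgn (ε i) * c i.succ) ^ 4)
                  + 56 * c 0 ^ 6 * (∑ i : Fin n, sgn (ε i) * c i.succ) ^ 2)
                + 2 * c 0 ^ 8 by ring,
          Finset.sum_add_distrib, Finset.sum_add_distrib, Finset.sum_add_distrib,
          Finset.sum_add_distrib,
          ← Finset.mul_sum, ← Finset.mul_sum, ← Finset.mul_sum, ← Finset.mul_sum,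
          Finset.sum_const, nsmul_eq_mul, hcard]
      rw [e, hc, show (2:ℝ)^(n+1) = 2 * 2^n from by ring]
      nlinarith [h8, mul_le_mul_of_nonneg_left h6 ha,
        mul_le_mul_of_nonneg_left h4 ha4, mul_le_mul_of_nonneg_left h2 ha6,
        mul_nonneg (mul_nonneg (mul_nonneg hP.le ha4) hσ) hσ,
        mul_nonneg (mul_nonneg hP.le ha6) hσ,
        mul_nonneg hP.le (pow_nonneg ha 4)]

lemma count_bad {n : ℕ} (c : Fin n → ℝ) (t : ℝ) (ht : 0 < t) :
    ((Finset.univ.filter fun ε : Fin n → Bool =>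
        t ≤ |∑ i, sgn (ε i) * c i|).card : ℝ) * t ^ 8
      ≤ 105 * 2 ^ n * (∑ i, c i ^ 2) ^ 4 := by
  classical
  have h8 := (moments n c).2.2.2
  have e1 : ((Finset.univ.filter fun ε : Fin n → Bool =>
        t ≤ |∑ i, sgn (ε i) * c i|).card : ℝ) * t ^ 8
      = ∑ _ε ∈ (Finset.univ.filter fun ε : Fin n → Bool =>
          t ≤ |∑ i, sgn (ε i) * c i|), t ^ 8 := by
    rw [Finset.sum_const, nsmul_eq_mul]
  rw [e1]
  refine le_trans (Finset.sum_le_sum fun ε hε => ?_)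
    (le_trans (Finset.sum_le_sum_of_subset_of_nonneg (Finset.filter_subset _ _)
      fun ε _ _ => by positivity) h8)
  simp only [Finset.mem_filter] at hε
  calc t ^ 8 ≤ |∑ i, sgn (ε i) * c i| ^ 8 := by
        exact pow_le_pow_left₀ ht.le hε.2 8
    _ = (∑ i, sgn (ε i) * c i) ^ 8 := by
        rw [← abs_pow, abs_of_nonneg (by positivity)]

end BP
/-- For all positive integers `r` there is `N* = N*(r)` such that for all `n ≥ N*`,
the vertex set of any multigraph of order `2n` with multiplicity at most `r` can be
partitioned into two equal parts `A` and `B` such that every vertex `v` satisfies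
`|d_A(v) − d_B(v)| < n^(2/3)`. -/
theorem balanced_partition_of_multigraph (r : ℕ) (hr : 0 < r) :
    ∃ N : ℕ, ∀ n : ℕ, N ≤ n →
      ∀ (V : Type) [Fintype V] [DecidableEq V], Fintype.card V = 2 * n →
        ∀ m : V → V → ℕ,
          (∀ u v, m u v = m v u) → (∀ v, m v v = 0) →
          (∀ u v, m u v ≤ r) →
          ∃ A B : Finset V,
            Disjoint A B ∧ A ∪ B = Finset.univ ∧
            A.card = n ∧ B.card = n ∧
            ∀ v : V,
              |(∑ x ∈ A, (m v x : ℝ)) - ∑ x ∈ B, (m v x : ℝ)| <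
                (n : ℝ) ^ ((2 : ℝ) / 3) := by
  refine ⟨(210 * r ^ 8) ^ 3 + 1, fun n hn V _ _ hV m hsymm hdiag hmul => ?_⟩
  have hn0 : 0 < n := lt_of_lt_of_le (Nat.succ_pos _) hn
  have hn0R : (0:ℝ) < n := by exact_mod_cast hn0
  set t : ℝ := (n:ℝ) ^ ((2:ℝ)/3) with ht_def
  have ht : 0 < t := Real.rpow_pos_of_pos hn0R _
  have hcardVB : Fintype.card (Fin n × Bool) = Fintype.card V := by
    simp [hV, mul_comm]
  let e : Fin n × Bool ≃ V := Fintype.equivOfCardEq hcardVB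
  let c : V → Fin n → ℝ := fun v i => (m v (e (i, true)) : ℝ) - (m v (e (i, false)) : ℝ)
  have hσ : ∀ v, (∑ i, c v i ^ 2) ≤ (n : ℝ) * (r:ℝ)^2 := by
    intro v
    have hstep : ∀ i : Fin n, c v i ^ 2 ≤ (r:ℝ)^2 := by
      intro i
      have h1 : (0:ℝ) ≤ (m v (e (i, true)) : ℝ) := Nat.cast_nonneg _
      have h2 : ((m v (e (i, true)) : ℝ)) ≤ r := by exact_mod_cast hmul _ _
      have h3 : (0:ℝ) ≤ (m v (e (i, false)) : ℝ) := Nat.cast_nonneg _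
      have h4 : ((m v (e (i, false)) : ℝ)) ≤ r := by exact_mod_cast hmul _ _
      have h5 : -(r:ℝ) ≤ c v i := by simp only [c]; linarith
      have h6 : c v i ≤ r := by simp only [c]; linarith
      exact sq_le_sq' h5 h6
    calc ∑ i, c v i ^ 2 ≤ ∑ _i : Fin n, (r:ℝ)^2 := Finset.sum_le_sum fun i _ => hstep i
      _ = n * (r:ℝ)^2 := by rw [Finset.sum_const]; simp
  let Bad : V → Finset (Fin n → Bool) :=
    fun v => Finset.univ.filter fun ε => t ≤ |∑ i, BP.sgn (ε i) * c v i|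
  have hBad : ∀ v, ((Bad v).card : ℝ) * t^8 ≤ 105 * 2^n * ((n:ℝ) * (r:ℝ)^2)^4 := by
    intro v
    refine le_trans (BP.count_bad (c v) t ht) ?_
    have h1 := pow_le_pow_left₀ (by positivity : (0:ℝ) ≤ ∑ i, c v i ^ 2) (hσ v) 4
    have h2 : (0:ℝ) < 2^n := by positivity
    nlinarith [h1, h2]
  have hnum : (2*(n:ℝ)) * (105 * 2^n * ((n:ℝ) * (r:ℝ)^2)^4) < 2^n * t^8 := by
    have hM0 : (0:ℝ) ≤ ((210 * r^8 : ℕ):ℝ) := Nat.cast_nonneg _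
    have e1 : t^8 = (n:ℝ) ^ ((16:ℝ)/3) := by
      rw [ht_def, ← Real.rpow_natCast ((n:ℝ) ^ ((2:ℝ)/3)) 8, ← Real.rpow_mul hn0R.le]
      norm_num
    have e2 : (n:ℝ) ^ ((16:ℝ)/3) = (n:ℝ)^(5:ℕ) * (n:ℝ) ^ ((1:ℝ)/3) := by
      rw [← Real.rpow_natCast (n:ℝ) 5, ← Real.rpow_add hn0R]
      norm_num
    have hM : (((210 * r^8 : ℕ):ℝ))^(3:ℕ) < (n:ℝ) := by
      have : (210 * r^8)^3 < n := hn
      exact_mod_cast this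
    have h3 : ((210 * r^8 : ℕ):ℝ) < (n:ℝ) ^ ((1:ℝ)/3) := by
      have key : ((210 * r^8 : ℕ):ℝ) = ((((210 * r^8 : ℕ):ℝ))^(3:ℕ)) ^ ((1:ℝ)/3) := by
        rw [← Real.rpow_natCast (((210 * r^8 : ℕ):ℝ)) 3, ← Real.rpow_mul hM0]
        norm_num
      rw [key]
      exact Real.rpow_lt_rpow (by positivity) hM (by norm_num)
    have h3' : 210 * (r:ℝ)^8 < (n:ℝ) ^ ((1:ℝ)/3) := by
      have : ((210 * r^8 : ℕ):ℝ) = 210 * (r:ℝ)^8 := by push_cast; ring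
      linarith [h3, this.ge]
    have h4 : 210 * (r:ℝ)^8 * (n:ℝ)^(5:ℕ) < t^8 := by
      rw [e1, e2]
      have h5 : (0:ℝ) < (n:ℝ)^(5:ℕ) := by positivity
      calc 210*(r:ℝ)^8 * (n:ℝ)^(5:ℕ) < (n:ℝ)^((1:ℝ)/3) * (n:ℝ)^(5:ℕ) :=
            mul_lt_mul_of_pos_right h3' h5
        _ = (n:ℝ)^(5:ℕ) * (n:ℝ)^((1:ℝ)/3) := by ring
    have e3 : (2*(n:ℝ)) * (105 * 2^n * ((n:ℝ) * (r:ℝ)^2)^4)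
        = 2^n * (210 * (r:ℝ)^8 * (n:ℝ)^(5:ℕ)) := by ring
    rw [e3]
    exact mul_lt_mul_of_pos_left h4 (by positivity)
  have hsum : ((∑ v : V, (Bad v).card : ℕ) : ℝ) * t^8 < 2^n * t^8 := by
    push_cast
    rw [Finset.sum_mul]
    refine lt_of_le_of_lt (Finset.sum_le_sum fun v _ => hBad v) ?_
    rw [Finset.sum_const, Finset.card_univ, hV, nsmul_eq_mul]
    push_cast
    exact le_of_eq (by ring) |>.trans_lt hnum
  have hcount : (∑ v : V, (Bad v).card) < 2^n := by
    have h1 : ((∑ v : V, (Bad v).card : ℕ) : ℝ) < 2^n :=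
      lt_of_mul_lt_mul_right hsum (le_of_lt (pow_pos ht 8))
    exact_mod_cast h1
  obtain ⟨ε, hε⟩ : ∃ ε : Fin n → Bool, ∀ v, ε ∉ Bad v := by
    by_contra hcon
    push_neg at hcon
    have hsub : (Finset.univ : Finset (Fin n → Bool)) ⊆ Finset.univ.biUnion Bad := by
      intro ε _
      obtain ⟨v, hv⟩ := hcon ε
      exact Finset.mem_biUnion.mpr ⟨v, Finset.mem_univ _, hv⟩
    have h1 := Finset.card_le_card hsub
    have h2 := Finset.card_biUnion_le (s := (Finset.univ : Finset V)) (t := Bad)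
    rw [Finset.card_univ] at h1
    have h3 : Fintype.card (Fin n → Bool) = 2^n := by simp
    omega
  have hε' : ∀ v, |∑ i, BP.sgn (ε i) * c v i| < t := by
    intro v
    by_contra hcontra
    exact hε v (Finset.mem_filter.mpr ⟨Finset.mem_univ _, not_lt.mp hcontra⟩)
  have injA : Function.Injective (fun i : Fin n => e (i, ε i)) := by
    intro i j hij
    exact ((Prod.mk.injEq _ _ _ _).mp (e.injective hij)).1
  have injB : Function.Injective (fun i : Fin n => e (i, !ε i)) := by
    intro i j hij
    exact ((Prod.mk.injEq _ _ _ _).mp (e.injective hij)).1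
  refine ⟨Finset.univ.image (fun i : Fin n => e (i, ε i)),
          Finset.univ.image (fun i : Fin n => e (i, !ε i)), ?_, ?_, ?_, ?_, ?_⟩
  · rw [Finset.disjoint_left]
    intro x hxA hxB
    obtain ⟨i, _, hi⟩ := Finset.mem_image.mp hxA
    obtain ⟨j, _, hj⟩ := Finset.mem_image.mp hxB
    rw [← hj] at hi
    obtain ⟨hij, hb⟩ := (Prod.mk.injEq _ _ _ _).mp (e.injective hi)
    subst hij
    simp at hb
  · ext x
    simp only [Finset.mem_union, Finset.mem_image, Finset.mem_univ, true_and, iff_true]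
    by_cases hb : (e.symm x).2 = ε (e.symm x).1
    · left
      exact ⟨(e.symm x).1, by rw [← hb, Prod.mk.eta, e.apply_symm_apply]⟩
    · right
      have hb' : (e.symm x).2 = !ε (e.symm x).1 := by
        cases h1 : (e.symm x).2 <;> cases h2 : ε (e.symm x).1 <;> simp_all
      exact ⟨(e.symm x).1, by rw [← hb', Prod.mk.eta, e.apply_symm_apply]⟩
  · rw [Finset.card_image_of_injective _ injA]
    simp
  · rw [Finset.card_image_of_injective _ injB]
    simp
  · intro v
    have hdeg : (∑ x ∈ Finset.univ.image (fun i : Fin n => e (i, ε i)), (m v x : ℝ))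
        - ∑ x ∈ Finset.univ.image (fun i : Fin n => e (i, !ε i)), (m v x : ℝ)
        = ∑ i, BP.sgn (ε i) * c v i := by
      rw [Finset.sum_image (fun x _ y _ h => injA h),
        Finset.sum_image (fun x _ y _ h => injB h), ← Finset.sum_sub_distrib]
      refine Finset.sum_congr rfl fun i _ => ?_
      cases hb : ε i <;> simp only [c, BP.sgn, hb, Bool.not_true, Bool.not_false,
        ite_true, ite_false, Bool.false_eq_true] <;> ring
    rw [hdeg]
    exact hε' v
end

section
/- Let n be an odd positive integer and r > 1 an integer, and let G be the multigraph of order 2n constructed as follows: the vertex set is partitioned into parts A and B with |A| = |B| = n; every pair of distinct vertices within A is joined by r parallel edges, every pair of distinct vertices within B is joined by r parallel edges, and the edges between A and B form a perfect matching of n vertex pairs, with each matched pair joined by r − 1 parallel edges. Then any collection of pairwise edge-disjoint 1-factors of G has size at most n(r − 1); in particular, every 1-factor of G contains at least one edge joining a vertex in A with a vertex in B. -/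
/-- A 1-factor (perfect matching) of the multigraph `m`: a sub-multigraph in which
every vertex has degree exactly one. -/
def IsOneFactor {V : Type*} [Fintype V] (m f : V → V → ℕ) : Prop :=
  (∀ u v, f u v = f v u) ∧ (∀ u v, f u v ≤ m u v) ∧ ∀ v, ∑ w, f v w = 1

/-- Let `n` be an odd positive integer and `r > 1`, and let `G` be the multigraph
of order `2n` whose vertex set is partitioned into `A` and `B` with
`|A| = |B| = n`, where any two distinct vertices within `A` (or within `B`) are
joined by `r` parallel edges, and the edges between `A` and `B` form a perfect
matching (given by the involution `σ`) with each matched pair joined by `r − 1`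
parallel edges.  Then any collection of pairwise edge-disjoint 1-factors of `G`
has size at most `n(r − 1)`; in particular, every 1-factor of `G` contains an
edge joining a vertex in `A` with a vertex in `B`. -/
theorem extremal_example_few_disjoint_one_factors
    (n r : ℕ) (hodd : Odd n) (hn : 0 < n) (hr : 1 < r)
    (V : Type) [Fintype V] [DecidableEq V]
    (hcard : Fintype.card V = 2 * n)
    (A B : Finset V) (hdisj : Disjoint A B) (hunion : A ∪ B = Finset.univ)
    (hA : A.card = n) (hB : B.card = n)
    (σ : V → V) (hσAB : ∀ a ∈ A, σ a ∈ B) (hσBA : ∀ b ∈ B, σ b ∈ A)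
    (hσinv : ∀ v, σ (σ v) = v)
    (m : V → V → ℕ)
    (hsym : ∀ u v, m u v = m v u) (hloop : ∀ v, m v v = 0)
    (hAA : ∀ a₁ ∈ A, ∀ a₂ ∈ A, a₁ ≠ a₂ → m a₁ a₂ = r)
    (hBB : ∀ b₁ ∈ B, ∀ b₂ ∈ B, b₁ ≠ b₂ → m b₁ b₂ = r)
    (hmatch : ∀ a ∈ A, m a (σ a) = r - 1)
    (hcross : ∀ a ∈ A, ∀ b ∈ B, b ≠ σ a → m a b = 0) :
    (∀ (k : ℕ) (F : Fin k → V → V → ℕ),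
        (∀ i, IsOneFactor m (F i)) →
        (∀ u v, ∑ i, F i u v ≤ m u v) →
        k ≤ n * (r - 1)) ∧
    (∀ f : V → V → ℕ, IsOneFactor m f →
        ∃ a ∈ A, ∃ b ∈ B, 0 < f a b) := by
  -- Key claim: every 1-factor uses at least one cross edge.
  have key : ∀ f : V → V → ℕ, IsOneFactor m f → 0 < ∑ a ∈ A, ∑ b ∈ B, f a b := by
    intro f hf
    obtain ⟨hsymf, hle, hdeg⟩ := hf
    by_contra hpos
    have hzero : ∀ a ∈ A, ∀ b ∈ B, f a b = 0 := by
      intro a ha b hb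
      have hs : ∑ a ∈ A, ∑ b ∈ B, f a b = 0 := by omega
      rw [Finset.sum_eq_zero_iff] at hs
      have := hs a ha
      rw [Finset.sum_eq_zero_iff] at this
      exact this b hb
    have hrow : ∀ a ∈ A, ∑ w ∈ A, f a w = 1 := by
      intro a ha
      have h1 := hdeg a
      rw [← hunion, Finset.sum_union hdisj] at h1
      have h2 : ∑ b ∈ B, f a b = 0 :=
        Finset.sum_eq_zero fun b hb => hzero a ha b hb
      omega
    have hS : ∑ p ∈ A ×ˢ A, f p.1 p.2 = n := by
      rw [Finset.sum_product]
      rw [Finset.sum_congr rfl hrow]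
      simp [hA]
    have hdiag : ∀ v : V, f v v = 0 := by
      intro v
      have := hle v v
      have := hloop v
      omega
    have hcast : ((∑ p ∈ A ×ˢ A, f p.1 p.2 : ℕ) : ZMod 2) = 0 := by
      push_cast
      apply Finset.sum_involution (fun p _ => (p.2, p.1))
      · intro p _
        rw [hsymf p.1 p.2]
        exact CharTwo.add_self_eq_zero _
      · intro p _ hne
        intro h
        apply hne
        have : p.2 = p.1 := congrArg Prod.fst h
        rw [this, hdiag]
        norm_num
      · intro p hp
        simp only [Finset.mem_product] at hp ⊢
        exact ⟨hp.2, hp.1⟩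
      · intro p _
        rfl
    rw [hS] at hcast
    have : (2 : ℕ) ∣ n := by
      exact (ZMod.natCast_eq_zero_iff n 2).mp hcast
    rw [Nat.odd_iff] at hodd
    omega
  have hBsum : ∀ a ∈ A, ∑ b ∈ B, m a b = r - 1 := by
    intro a ha
    rw [Finset.sum_eq_single_of_mem (σ a) (hσAB a ha)]
    · exact hmatch a ha
    · intro b hb hne
      exact hcross a ha b hb hne
  constructor
  · intro k F hF hdis
    calc k = ∑ _i : Fin k, 1 := by simp
      _ ≤ ∑ i, ∑ a ∈ A, ∑ b ∈ B, F i a b :=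
          Finset.sum_le_sum fun i _ => key (F i) (hF i)
      _ = ∑ a ∈ A, ∑ b ∈ B, ∑ i, F i a b := by
          rw [Finset.sum_comm]
          exact Finset.sum_congr rfl fun a _ => Finset.sum_comm
      _ ≤ ∑ a ∈ A, ∑ b ∈ B, m a b :=
          Finset.sum_le_sum fun a _ => Finset.sum_le_sum fun b _ => hdis a b
      _ = ∑ a ∈ A, (r - 1) := Finset.sum_congr rfl hBsum
      _ = n * (r - 1) := by rw [Finset.sum_const, hA, smul_eq_mul]
  · intro f hf
    by_contra h
    push_neg at h
    have hz : ∑ a ∈ A, ∑ b ∈ B, f a b = 0 :=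
      Finset.sum_eq_zero fun a ha => Finset.sum_eq_zero fun b hb =>
        Nat.le_zero.mp (h a ha b hb)
    have := key f hf
    omega
end
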